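/- arXiv:1202.4514 — 2 statements merged into one kernel-verified Lean document; each statement's English description precedes it below -/
import Mathlib

section
/- Symmetric index sum: For any finite simple graph G and injective f : V → ℝ, the symmetric index j_f(x) = (i_f(x) + i_{-f}(x))/2 satisfies Σ_{x∈V} j_f(x) = χ(G). -/
open Finset SimpleGraph MeasureTheory
open scoped Classical

noncomputable section

variable {V : Type*} [Fintype V] [DecidableEq V]

/-- Number of cliques on `k` vertices in `G`. -/
def cliqueCount (G : SimpleGraph V) (k : ℕ) : ℕ := (G.cliqueFinset k).card

/-- Number of cliques on `k` vertices contained in the unit sphere `S(x)`. -/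
def sphereCliques (G : SimpleGraph V) (x : V) (k : ℕ) : ℕ :=
  ((G.cliqueFinset k).filter fun s => s ⊆ G.neighborFinset x).card

/-- Number of `k`-vertex cliques in the exit set `S_f^-(x)`. -/
def minusCliques (G : SimpleGraph V) (f : V → ℝ) (x : V) (k : ℕ) : ℕ :=
  ((G.cliqueFinset k).filter fun s => s ⊆ G.neighborFinset x ∧ ∀ y ∈ s, f y < f x).card

/-- Number of `k`-vertex cliques in the entrance set `S_f^+(x)`. -/
def plusCliques (G : SimpleGraph V) (f : V → ℝ) (x : V) (k : ℕ) : ℕ :=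
  ((G.cliqueFinset k).filter fun s => s ⊆ G.neighborFinset x ∧ ∀ y ∈ s, f x < f y).card

/-- Number of `k`-vertex cliques in `S(x)` with vertices both below and above `f x`. -/
def mixedCliques (G : SimpleGraph V) (f : V → ℝ) (x : V) (k : ℕ) : ℕ :=
  ((G.cliqueFinset k).filter fun s =>
    s ⊆ G.neighborFinset x ∧ (∃ y ∈ s, f y < f x) ∧ (∃ z ∈ s, f x < f z)).card

/-- Euler characteristic `χ(G) = Σ_k (-1)^k v_k`. -/
def eulerChar (G : SimpleGraph V) : ℤ :=
  ∑ k ∈ Finset.range (Fintype.card V + 1), (-1 : ℤ) ^ k * cliqueCount G (k + 1)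

/-- Euler characteristic of the exit set `S_f^-(x)`. -/
def chiMinus (G : SimpleGraph V) (f : V → ℝ) (x : V) : ℤ :=
  ∑ k ∈ Finset.range (Fintype.card V + 1), (-1 : ℤ) ^ k * minusCliques G f x (k + 1)

/-- Poincaré–Hopf index `i_f(x) = 1 - χ(S_f^-(x))`. -/
def pindex (G : SimpleGraph V) (f : V → ℝ) (x : V) : ℤ := 1 - chiMinus G f x

/-- Symmetric index `j_f(x) = (i_f(x) + i_{-f}(x))/2`. -/
def symIndex (G : SimpleGraph V) (f : V → ℝ) (x : V) : ℚ :=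
  ((pindex G f x : ℚ) + (pindex G (-f) x : ℚ)) / 2

/-- Curvature `K(x) = Σ_k (-1)^k V_{k-1}(x)/(k+1)`. -/
def curvature (G : SimpleGraph V) (x : V) : ℚ :=
  ∑ k ∈ Finset.range (Fintype.card V + 1),
    (-1 : ℚ) ^ k * (sphereCliques G x k : ℚ) / (k + 1)

/-- The uniform probability measure on `[-1,1]`. -/
def unif : Measure ℝ := (2 : ENNReal)⁻¹ • volume.restrict (Set.Icc (-1 : ℝ) 1)

/-- The product measure on `V → ℝ` with i.i.d. uniform `[-1,1]` coordinates. -/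
def uniMeasure (V : Type*) [Fintype V] : Measure (V → ℝ) := Measure.pi fun _ => unif


/- Every `(k + 2)`-clique of `G` arises exactly once as `insert x s` with `s` a `(k + 1)`-clique of
the exit set `S_f^-(x)`, namely with `x` its vertex of largest `f`-value. Hence `Σ_x χ(S_f^-(x))`
is the alternating clique count of `G` shifted by one, so `Σ_x i_f(x) = χ(G)`; `j_f` averages
this for `f` and `-f`. -/

theorem eq_of_insert_eq_insert_of_forall_lt {β α : Type*} [DecidableEq β] [Preorder α]
    {f : β → α} {x x' : β} {s s' : Finset β} (hs : ∀ y ∈ s, f y < f x) (hs' : ∀ y ∈ s', f y < f x')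
    (h : insert x s = insert x' s') : x = x' ∧ s = s' := by
  have hxx' : x = x' := by
    by_contra hne
    have hx : x ∈ s' := (mem_insert.1 (h ▸ mem_insert_self x s)).resolve_left hne
    have hx' : x' ∈ s := (mem_insert.1 (h ▸ mem_insert_self x' s')).resolve_left (Ne.symm hne)
    exact lt_asymm (hs x' hx') (hs' x hx)
  subst hxx'
  refine ⟨rfl, ?_⟩
  rw [← erase_insert fun hx => lt_irrefl _ (hs x hx), h,
    erase_insert fun hx => lt_irrefl _ (hs' x hx)]

theorem exists_mem_forall_mem_erase_lt {β α : Type*} [DecidableEq β] [LinearOrder α]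
    {f : β → α} (hf : Function.Injective f) {t : Finset β} (ht : t.Nonempty) :
    ∃ x ∈ t, ∀ y ∈ t.erase x, f y < f x := by
  obtain ⟨x, hx, hmax⟩ := exists_max_image t f ht
  exact ⟨x, hx, fun y hy => (hmax y (mem_of_mem_erase hy)).lt_of_ne
    fun hxy => ne_of_mem_erase hy (hf hxy)⟩

theorem sum_range_alternating_add_shift {R : Type*} [CommRing R] (v : ℕ → R) (n : ℕ) :
    ∑ k ∈ range (n + 1), (-1) ^ k * v (k + 1) + ∑ k ∈ range (n + 1), (-1) ^ k * v (k + 2)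
      = v 1 + (-1) ^ n * v (n + 2) := by
  induction n with
  | zero => simp
  | succ n ih =>
    rw [sum_range_succ, sum_range_succ (fun k => (-1 : R) ^ k * v (k + 2))]
    linear_combination ih

section Cliques

variable (G : SimpleGraph V)

theorem cliqueCount_one : cliqueCount G 1 = Fintype.card V := by
  rw [cliqueCount, show G.cliqueFinset 1 = univ.map ⟨singleton, singleton_injective⟩ from
    coe_injective (by simp [cliqueSet_one]), card_map, card_univ]

theorem cliqueCount_card_add_two : cliqueCount G (Fintype.card V + 2) = 0 := by
  rw [cliqueCount, (G.cliqueFree_of_card_lt (by omega)).cliqueFinset, card_empty]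

theorem sum_minusCliques {f : V → ℝ} (hf : Function.Injective f) (k : ℕ) :
    ∑ x, minusCliques G f x (k + 1) = cliqueCount G (k + 2) := by
  unfold cliqueCount minusCliques
  rw [← card_sigma]
  refine card_bij (fun p _ => insert p.1 p.2) ?_ ?_ ?_
  · rintro ⟨x, s⟩ hp
    simp only [mem_sigma, mem_filter, mem_cliqueFinset_iff] at hp ⊢
    exact hp.2.1.insert fun y hy => (G.mem_neighborFinset x y).1 (hp.2.2.1 hy)
  · rintro ⟨x, s⟩ hp ⟨x', s'⟩ hp' h
    simp only [mem_sigma, mem_filter] at hp hp'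
    obtain ⟨rfl, rfl⟩ := eq_of_insert_eq_insert_of_forall_lt hp.2.2.2 hp'.2.2.2 h
    rfl
  · intro t ht
    rw [mem_cliqueFinset_iff] at ht
    obtain ⟨x, hx, hlt⟩ :=
      exists_mem_forall_mem_erase_lt hf (card_pos.1 (by rw [ht.card_eq]; omega))
    refine ⟨⟨x, t.erase x⟩, ?_, insert_erase hx⟩
    simp only [mem_sigma, mem_filter, mem_univ, mem_cliqueFinset_iff, true_and]
    refine ⟨ht.erase_of_mem hx, fun y hy => ?_, hlt⟩
    exact (G.mem_neighborFinset x y).2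
      (ht.isClique hx (mem_of_mem_erase hy) (ne_of_mem_erase hy).symm)

theorem sum_pindex {f : V → ℝ} (hf : Function.Injective f) :
    ∑ x, pindex G f x = eulerChar G := by
  have shift := sum_range_alternating_add_shift (fun k => (cliqueCount G k : ℤ)) (Fintype.card V)
  simp only [cliqueCount_one, cliqueCount_card_add_two, Nat.cast_zero, mul_zero, add_zero] at shift
  simp only [pindex, chiMinus, sum_sub_distrib, sum_const, card_univ, nsmul_eq_mul, mul_one]
  rw [sum_comm]
  simp only [← mul_sum, ← Nat.cast_sum, sum_minusCliques G hf]
  rw [eulerChar]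
  linear_combination -shift

end Cliques

/-- The symmetric index `j_f(x) = (i_f(x)+i_{-f}(x))/2` also sums to `χ(G)`. -/
theorem symmetric_index_sum (G : SimpleGraph V) (f : V → ℝ)
    (hf : Function.Injective f) :
    ∑ x : V, symIndex G f x = (eulerChar G : ℚ) := by
  have hnf : Function.Injective (-f) := neg_injective.comp hf
  simp only [symIndex, ← sum_div, sum_add_distrib, ← Int.cast_sum, sum_pindex G hf,
    sum_pindex G hnf]
  ring

end
end

section
/- Expected Euler characteristic of the random exit set: Let G be a finite simple graph and f have i.i.d. uniform([-1,1]) values on V. Then for every vertex x, E[χ(S_f^-(x))] = Σ_{k≥0} (-1)^k V_k(x)/(k+2), where V_k(x) is the number of (k+1)-cliques in the subgraph induced by the neighbors of x. -/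
open Finset SimpleGraph MeasureTheory
open scoped Classical

noncomputable section

variable {V : Type*} [Fintype V] [DecidableEq V]

/-
Expanding χ(S_f^-(x)) over cliques, it is the alternating sum, over the cliques s of the unit
sphere S(x), of the indicator that f < f(x) on s. Conditioning on t = f(x), the |s| other values
fall below t independently, each with probability F(t) = (t + 1)/2, so this event has probability
∫ F^|s| dF = 1/(|s| + 1); linearity of expectation gives the formula.
-/

theorem measurePreserving_piSplitAt {ι : Type*} [Fintype ι] [DecidableEq ι]
    {X : ι → Type*} [∀ i, MeasurableSpace (X i)] (μ : ∀ i, Measure (X i))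
    [∀ i, SigmaFinite (μ i)] (i : ι) :
    MeasurePreserving (Equiv.piSplitAt i X)
      (Measure.pi μ) ((μ i).prod (Measure.pi fun j : {j // j ≠ i} => μ j)) := by
  have hsplit : MeasurePreserving (MeasurableEquiv.piEquivPiSubtypeProd X (· = i))
      (Measure.pi μ) ((Measure.pi fun j : {j // j = i} => μ j).prod
        (Measure.pi fun j : {j // j ≠ i} => μ j)) := by
    convert measurePreserving_piEquivPiSubtypeProd μ (· = i)
  exact ((measurePreserving_piUnique fun j : {j // j = i} => μ j).prod (.id _)).comp hsplit

theorem prod_subtype_ne_ite_mem {ι M : Type*} [Fintype ι] [CommMonoid M]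
    {i : ι} {s : Finset ι} (hi : i ∉ s) (a : M) :
    ∏ j : {j // j ≠ i}, (if j.1 ∈ s then a else 1) = a ^ s.card := by
  have := Fintype.prod_eq_mul_prod_subtype_ne (fun j => if j ∈ s then a else 1) i
  simp_all [Finset.prod_ite_mem]

theorem measure_pi_forall_lt_eq_lintegral {ι : Type*} [Fintype ι]
    (μ : Measure ℝ) [IsProbabilityMeasure μ] {i : ι} {s : Finset ι} (hi : i ∉ s) :
    Measure.pi (fun _ : ι => μ) {f | ∀ j ∈ s, f j < f i} = ∫⁻ t, μ (Set.Iio t) ^ s.card ∂μ := by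
  classical
  set B : Set (ℝ × ({j // j ≠ i} → ℝ)) := {p | ∀ j : {j // j ≠ i}, j.1 ∈ s → p.2 j < p.1}
  have hB : MeasurableSet B := by
    simp only [B, Set.ofPred_forall]
    exact .iInter fun j => .iInter fun _ => measurableSet_lt (by fun_prop) (by fun_prop)
  have hpre : {f : ι → ℝ | ∀ j ∈ s, f j < f i} =
      Equiv.piSplitAt i (fun _ => ℝ) ⁻¹' B := by
    ext f
    simp only [B, Set.mem_ofPred_eq, Set.mem_preimage, Equiv.piSplitAt_apply, Subtype.forall]
    exact ⟨fun h j _ hj => h j hj, fun h j hj => h j (ne_of_mem_of_not_mem hj hi) hj⟩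
  have hsection (t : ℝ) : Prod.mk t ⁻¹' B =
      Set.univ.pi fun j : {j // j ≠ i} => if j.1 ∈ s then Set.Iio t else Set.univ := by
    ext g
    simp only [B, Set.mem_preimage, Set.mem_ofPred_eq, Set.mem_univ_pi]
    refine forall_congr' fun j => ?_
    split_ifs <;> simp [*]
  rw [hpre, (measurePreserving_piSplitAt _ i).measure_preimage hB.nullMeasurableSet,
    Measure.prod_apply hB]
  refine lintegral_congr fun t => ?_
  rw [hsection, Measure.pi_pi, ← prod_subtype_ne_ite_mem hi]
  congr with j
  split_ifs <;> simp

instance : IsProbabilityMeasure unif := by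
  constructor
  simp [unif, Real.volume_Icc, one_add_one_eq_two, ENNReal.inv_mul_cancel]

theorem unif_Iio {t : ℝ} (ht : t ∈ Set.Icc (-1 : ℝ) 1) :
    unif (Set.Iio t) = ENNReal.ofReal ((t + 1) / 2) := by
  have hIco : Set.Iio t ∩ Set.Icc (-1 : ℝ) 1 = Set.Ico (-1) t := by
    ext u
    simp only [Set.mem_inter_iff, Set.mem_Iio, Set.mem_Icc, Set.mem_Ico]
    exact ⟨fun h => ⟨h.2.1, h.1⟩, fun h => ⟨h.2, h.1, h.2.le.trans ht.2⟩⟩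
  rw [unif, Measure.smul_apply, Measure.restrict_apply measurableSet_Iio, hIco, Real.volume_Ico,
    smul_eq_mul, ← ENNReal.ofReal_ofNat 2, ← ENNReal.ofReal_inv_of_pos two_pos,
    ← ENNReal.ofReal_mul (by norm_num)]
  ring_nf

theorem integral_Icc_half_add_pow (m : ℕ) :
    ∫ t in Set.Icc (-1 : ℝ) 1, ((t + 1) / 2) ^ m = 2 / (m + 1) := by
  rw [integral_Icc_eq_integral_Ioc, ← intervalIntegral.integral_of_le (by norm_num)]
  have h := intervalIntegral.integral_comp_mul_add (a := -1) (b := 1) (fun u : ℝ => u ^ m)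
    (inv_ne_zero (two_ne_zero (α := ℝ))) 2⁻¹
  simp only [integral_pow] at h
  convert h using 1
  · congr with t; ring
  · norm_num; field_simp

theorem lintegral_unif (g : ℝ → ENNReal) :
    ∫⁻ t, g t ∂unif = 2⁻¹ * ∫⁻ t in Set.Icc (-1 : ℝ) 1, g t :=
  lintegral_smul_measure _ _

theorem lintegral_unif_Iio_pow (m : ℕ) :
    ∫⁻ t, unif (Set.Iio t) ^ m ∂unif = ENNReal.ofReal (1 / (m + 1)) := by
  have hnonneg : ∀ t ∈ Set.Icc (-1 : ℝ) 1, 0 ≤ ((t + 1) / 2) ^ m :=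
    fun t ht => pow_nonneg (by linarith [ht.1]) m
  calc ∫⁻ t, unif (Set.Iio t) ^ m ∂unif
      = 2⁻¹ * ∫⁻ t in Set.Icc (-1 : ℝ) 1, ENNReal.ofReal (((t + 1) / 2) ^ m) := by
        rw [lintegral_unif]
        congr 1
        refine setLIntegral_congr_fun measurableSet_Icc fun t ht => ?_
        rw [unif_Iio ht, ENNReal.ofReal_pow (by linarith [ht.1])]
    _ = ENNReal.ofReal (2⁻¹ * (2 / (m + 1))) := by
        rw [← ofReal_integral_eq_lintegral_ofReal
          (by fun_prop : Continuous fun t : ℝ => ((t + 1) / 2) ^ m).integrableOn_Icc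
          ((ae_restrict_iff' measurableSet_Icc).2 (.of_forall hnonneg)),
          integral_Icc_half_add_pow, ENNReal.ofReal_mul (by norm_num),
          ENNReal.ofReal_inv_of_pos two_pos, ENNReal.ofReal_ofNat]
    _ = ENNReal.ofReal (1 / (m + 1)) := by
        congr 1; field_simp

instance : IsProbabilityMeasure (uniMeasure V) := by
  rw [uniMeasure]; infer_instance

theorem measurableSet_forall_lt {ι : Type*} (s : Finset ι) (i : ι) :
    MeasurableSet {f : ι → ℝ | ∀ j ∈ s, f j < f i} := by
  simpa only [Set.ofPred_forall] using s.measurableSet_biInter fun j _ =>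
    measurableSet_lt (measurable_pi_apply j) (measurable_pi_apply i)

theorem integrable_indicator_forall_lt {ι : Type*} (μ : Measure (ι → ℝ)) [IsFiniteMeasure μ]
    (s : Finset ι) (i : ι) :
    Integrable ({f : ι → ℝ | ∀ j ∈ s, f j < f i}.indicator (1 : (ι → ℝ) → ℝ)) μ :=
  (integrable_const 1).indicator (measurableSet_forall_lt s i)

theorem uniMeasure_real_forall_lt {ι : Type*} [Fintype ι] {i : ι} {s : Finset ι} (hi : i ∉ s) :
    (uniMeasure ι).real {f | ∀ j ∈ s, f j < f i} = 1 / (s.card + 1) := by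
  rw [measureReal_def, uniMeasure, measure_pi_forall_lt_eq_lintegral unif hi,
    lintegral_unif_Iio_pow, ENNReal.toReal_ofReal (by positivity)]

theorem minusCliques_eq_sum_indicator (G : SimpleGraph V) (f : V → ℝ) (x : V) (k : ℕ) :
    (minusCliques G f x k : ℝ) = ∑ s ∈ (G.cliqueFinset k).filter (· ⊆ G.neighborFinset x),
      {g : V → ℝ | ∀ y ∈ s, g y < g x}.indicator 1 f := by
  rw [minusCliques, ← Finset.filter_filter, Finset.card_filter]
  push_cast
  simp only [Set.indicator_apply, Set.mem_ofPred_eq]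
  rfl

theorem integrable_minusCliques (G : SimpleGraph V) (x : V) (k : ℕ) :
    Integrable (fun f => (minusCliques G f x k : ℝ)) (uniMeasure V) := by
  simp only [minusCliques_eq_sum_indicator]
  exact integrable_finsetSum _ fun s _ => integrable_indicator_forall_lt _ s x

theorem integral_minusCliques (G : SimpleGraph V) (x : V) (k : ℕ) :
    ∫ f, (minusCliques G f x k : ℝ) ∂(uniMeasure V) = sphereCliques G x k / (k + 1) := by
  have hterm : ∀ s ∈ (G.cliqueFinset k).filter (· ⊆ G.neighborFinset x),
      ∫ f, {g : V → ℝ | ∀ y ∈ s, g y < g x}.indicator (1 : (V → ℝ) → ℝ) f ∂(uniMeasure V) =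
        1 / (k + 1) := by
    intro s hs
    obtain ⟨hclique, hsphere⟩ := Finset.mem_filter.1 hs
    have hx : x ∉ s := fun hxs => G.notMem_neighborFinset_self x (hsphere hxs)
    rw [integral_indicator_one (measurableSet_forall_lt s x), uniMeasure_real_forall_lt hx,
      (G.mem_cliqueFinset_iff.1 hclique).card_eq]
  simp only [minusCliques_eq_sum_indicator]
  rw [integral_finsetSum _ fun s _ => integrable_indicator_forall_lt _ s x,
    Finset.sum_congr rfl hterm, Finset.sum_const, nsmul_eq_mul, sphereCliques]
  ring

/-- Expected Euler characteristic of the random exit set: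
`E[χ(S_f^-(x))] = Σ_k (-1)^k V_k(x)/(k+2)`. -/
theorem expected_exit_euler_char (G : SimpleGraph V) (x : V) :
    (∫ f, (chiMinus G f x : ℝ) ∂(uniMeasure V)) =
      ∑ k ∈ Finset.range (Fintype.card V + 1),
        (-1 : ℝ) ^ k * (sphereCliques G x (k + 1) : ℝ) / (k + 2) := by
  simp only [chiMinus, Int.cast_sum, Int.cast_mul, Int.cast_pow, Int.cast_neg, Int.cast_one,
    Int.cast_natCast]
  rw [integral_finsetSum _ fun k _ => (integrable_minusCliques G x (k + 1)).const_mul _]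
  refine Finset.sum_congr rfl fun k _ => ?_
  rw [integral_const_mul, integral_minusCliques]
  push_cast
  ring

end
end
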